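/- arXiv:2503.02641 — 3 statements merged into one kernel-verified Lean document; each statement's English description precedes it below -/
import Mathlib

section
/- Let j₁, j₂, j₃ be positive half-integers (elements of ℕ/2, each > 0) satisfying the recoupling (triangle) conditions |j₁ − j₂| ≤ j₃ ≤ j₁ + j₂. Then with f(j) = √(j(j+1)) the strict inequalities |f(j₁) − f(j₂)| < f(j₃) < f(j₁) + f(j₂) hold. -/
/-!
`f x = √(x (x + 1))` is monotone on `[0, ∞)` and strictly subadditive on positive reals, because
`f a f b > a b`. For any such `f`, the triangle inequalities for positive `a, b, c` become strict ones
for `f a, f b, f c`: `f c ≤ f (a + b) < f a + f b`, and for `b < a`, `f a < f (a - b) + f b ≤ f c + f b`.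
-/

open Real

section StrictlySubadditive

variable {f : ℝ → ℝ} (hmono : MonotoneOn f (Set.Ici 0))
  (hsub : ∀ x y, 0 < x → 0 < y → f (x + y) < f x + f y)
include hmono hsub

theorem pos_of_strictSubadditive {x : ℝ} (hx : 0 < x) : 0 < f x := by
  have : f x ≤ f (x + x) := hmono (Set.mem_Ici.2 hx.le) (Set.mem_Ici.2 (by linarith)) (by linarith)
  linarith [hsub x x hx hx]

theorem sub_lt_of_strictSubadditive {a b c : ℝ} (ha : 0 < a) (hb : 0 < b) (hc : 0 < c)
    (habc : a - b ≤ c) : f a - f b < f c := by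
  rcases le_or_gt a b with hab | hba
  · have : f a ≤ f b := hmono (Set.mem_Ici.2 ha.le) (Set.mem_Ici.2 hb.le) hab
    linarith [pos_of_strictSubadditive hmono hsub hc]
  · have hsplit : f a < f (a - b) + f b := by
      simpa using hsub (a - b) b (by linarith) hb
    have : f (a - b) ≤ f c := hmono (Set.mem_Ici.2 (by linarith)) (Set.mem_Ici.2 hc.le) habc
    linarith

theorem abs_sub_lt_and_lt_add_of_strictSubadditive {a b c : ℝ} (ha : 0 < a) (hb : 0 < b)
    (hc : 0 < c) (hlow : |a - b| ≤ c) (hup : c ≤ a + b) :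
    |f a - f b| < f c ∧ f c < f a + f b := by
  obtain ⟨hba, hab⟩ := abs_le.1 hlow
  refine ⟨abs_lt.2 ⟨?_, sub_lt_of_strictSubadditive hmono hsub ha hb hc hab⟩, ?_⟩
  · linarith [sub_lt_of_strictSubadditive hmono hsub hb ha hc (by linarith)]
  · calc f c ≤ f (a + b) := hmono (Set.mem_Ici.2 hc.le) (Set.mem_Ici.2 (by linarith)) hup
      _ < f a + f b := hsub a b ha hb

end StrictlySubadditive

theorem monotoneOn_sqrt_mul_add_one : MonotoneOn (fun x : ℝ => √(x * (x + 1))) (Set.Ici 0) :=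
  fun a ha _ _ hab => sqrt_le_sqrt (by have := Set.mem_Ici.1 ha; nlinarith)

theorem sqrt_add_mul_add_one_lt {a b : ℝ} (ha : 0 < a) (hb : 0 < b) :
    √((a + b) * (a + b + 1)) < √(a * (a + 1)) + √(b * (b + 1)) := by
  have hA : 0 ≤ a * (a + 1) := by positivity
  have hB : 0 ≤ b * (b + 1) := by positivity
  have hcross : a * b < √(a * (a + 1)) * √(b * (b + 1)) := by
    rw [← sqrt_mul hA, lt_sqrt (by positivity)]
    nlinarith [mul_pos ha hb]
  rw [sqrt_lt' (by positivity)]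
  nlinarith [sq_sqrt hA, sq_sqrt hB]

theorem strict_triangle_of_recoupling_general (j₁ j₂ j₃ : ℝ)
    (hp₁ : 0 < j₁) (hp₂ : 0 < j₂) (hp₃ : 0 < j₃)
    (htri₁ : |j₁ - j₂| ≤ j₃) (htri₂ : j₃ ≤ j₁ + j₂) :
    |Real.sqrt (j₁ * (j₁ + 1)) - Real.sqrt (j₂ * (j₂ + 1))| < Real.sqrt (j₃ * (j₃ + 1)) ∧
    Real.sqrt (j₃ * (j₃ + 1)) < Real.sqrt (j₁ * (j₁ + 1)) + Real.sqrt (j₂ * (j₂ + 1)) :=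
  abs_sub_lt_and_lt_add_of_strictSubadditive monotoneOn_sqrt_mul_add_one
    (fun _ _ => sqrt_add_mul_add_one_lt) hp₁ hp₂ hp₃ htri₁ htri₂

/-- Nonzero admissible half-integer spins satisfying the triangle conditions yield
strict triangle inequalities for `f j = √(j(j+1))`. -/
theorem strict_triangle_of_recoupling (j₁ j₂ j₃ : ℝ)
    (h₁ : ∃ n : ℕ, j₁ = n / 2) (h₂ : ∃ n : ℕ, j₂ = n / 2) (h₃ : ∃ n : ℕ, j₃ = n / 2)
    (hp₁ : 0 < j₁) (hp₂ : 0 < j₂) (hp₃ : 0 < j₃)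
    (htri₁ : |j₁ - j₂| ≤ j₃) (htri₂ : j₃ ≤ j₁ + j₂) :
    |Real.sqrt (j₁ * (j₁ + 1)) - Real.sqrt (j₂ * (j₂ + 1))| < Real.sqrt (j₃ * (j₃ + 1)) ∧
    Real.sqrt (j₃ * (j₃ + 1)) < Real.sqrt (j₁ * (j₁ + 1)) + Real.sqrt (j₂ * (j₂ + 1)) :=
  strict_triangle_of_recoupling_general j₁ j₂ j₃ hp₁ hp₂ hp₃ htri₁ htri₂
end

section
/- Consider the phase space ℝ² with coordinates (ρ, η) (restricted to η > 0) and Poisson bracket determined by {ρ, η} = κ/a², where κ, a > 0. Set t = κħ/a², χ(η) = √((η/t)² + 1/4) − 1/2, and r(η) = √(η² + t²/4)/η. Then {e^{i r(η) ρ}, χ(η)} = (i/ħ)·e^{i r(η) ρ}, and more generally {e^{±i r(η) ρ}, χ(η)} = ±(i/ħ)·e^{±i r(η) ρ}. -/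
open Complex

/-- The Poisson bracket `{f, g} = (κ/a²)(∂f/∂ρ ∂g/∂η − ∂f/∂η ∂g/∂ρ)` of two
(complex-valued) functions of the phase-space coordinates `(ρ, η)`. -/
noncomputable def poissonBracket (κ a : ℝ) (f g : ℝ → ℝ → ℂ) (ρ η : ℝ) : ℂ :=
  ((κ / a ^ 2 : ℝ) : ℂ) *
    (deriv (fun ρ' => f ρ' η) ρ * deriv (fun η' => g ρ η') η -
     deriv (fun η' => f ρ η') η * deriv (fun ρ' => g ρ' η) ρ)

/-! Since `χ` depends on `η` alone, the bracket reduces to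
`(κ/a²) ∂_ρ e^{i r ρ} · χ'(η) = (κ/a²) · i r(η) χ'(η) · e^{i r ρ}`.
Writing `√(η² + t²/4) = t √((η/t)² + 1/4)`, the square roots in `r` and in
`χ'(η) = η / (t² √((η/t)² + 1/4))` cancel, leaving `r χ' = 1/t = a²/(κħ)`. -/

theorem poissonBracket_snd_of_fst_const (κ a : ℝ) (f : ℝ → ℝ → ℂ) (g : ℝ → ℂ) (ρ η : ℝ) :
    poissonBracket κ a f (fun _ η' => g η') ρ η
      = ((κ / a ^ 2 : ℝ) : ℂ) * deriv (fun ρ' => f ρ' η) ρ * deriv g η := by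
  simp only [poissonBracket, deriv_const', mul_zero, sub_zero, mul_assoc]

theorem hasDerivAt_cexp_mul_ofReal (c : ℂ) (x : ℝ) :
    HasDerivAt (fun y : ℝ => cexp (c * y)) (c * cexp (c * x)) x := by
  simpa [mul_comm] using ((hasDerivAt_id x).ofReal_comp.const_mul c).cexp

theorem poissonBracket_cexp_mul_ofReal (κ a : ℝ) (c : ℂ) (r g : ℝ → ℝ) {d ρ η : ℝ}
    (hg : HasDerivAt g d η) :
    poissonBracket κ a (fun ρ' η' => cexp (c * r η' * ρ')) (fun _ η' => (g η' : ℂ)) ρ η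
      = c * ((κ / a ^ 2 * (r η * d) : ℝ) : ℂ) * cexp (c * r η * ρ) := by
  rw [poissonBracket_snd_of_fst_const, (hasDerivAt_cexp_mul_ofReal _ ρ).deriv,
    hg.ofReal_comp.deriv]
  push_cast
  ring

theorem sqrt_sq_add_sq_div_four {t : ℝ} (ht : 0 < t) (η : ℝ) :
    √(η ^ 2 + t ^ 2 / 4) = t * √((η / t) ^ 2 + 1 / 4) := by
  rw [show η ^ 2 + t ^ 2 / 4 = t ^ 2 * ((η / t) ^ 2 + 1 / 4) by field_simp,
    Real.sqrt_mul (sq_nonneg t), Real.sqrt_sq ht.le]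

theorem hasDerivAt_sqrt_div_sq_add_quarter_sub_half {t : ℝ} (ht : t ≠ 0) (η : ℝ) :
    HasDerivAt (fun η' => √((η' / t) ^ 2 + 1 / 4) - 1 / 2)
      (η / (t ^ 2 * √((η / t) ^ 2 + 1 / 4))) η := by
  have hpos : (η / t) ^ 2 + 1 / 4 ≠ 0 := by positivity
  refine (((((hasDerivAt_id η).div_const t).pow 2).add_const (1 / 4)).sqrt hpos
    |>.sub_const (1 / 2)).congr_deriv ?_
  simp only [Pi.pow_apply, id, Nat.cast_ofNat, Nat.add_one_sub_one, pow_one]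
  field_simp

theorem sqrt_div_mul_div_sqrt {t η : ℝ} (ht : 0 < t) (hη : η ≠ 0) :
    √(η ^ 2 + t ^ 2 / 4) / η * (η / (t ^ 2 * √((η / t) ^ 2 + 1 / 4))) = 1 / t := by
  have hsqrt : 0 < √((η / t) ^ 2 + 1 / 4) := Real.sqrt_pos.mpr (by positivity)
  rw [sqrt_sq_add_sq_div_four ht]
  field_simp

/-- Classical shift relation: `{e^{±i r(η)ρ}, χ(η)} = ±(i/hbar) e^{±i r(η)ρ}`, where
`t = κhbar/a²`, `χ(η) = √((η/t)² + 1/4) − 1/2` and `r(η) = √(η² + t²/4)/η`. -/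
theorem poissonBracket_exp_chi (κ a hbar : ℝ) (hκ : 0 < κ) (ha : 0 < a) (hb : 0 < hbar)
    (t : ℝ) (ht : t = κ * hbar / a ^ 2)
    (χ : ℝ → ℝ) (hχ : ∀ η, χ η = Real.sqrt ((η / t) ^ 2 + 1 / 4) - 1 / 2)
    (r : ℝ → ℝ) (hr : ∀ η, r η = Real.sqrt (η ^ 2 + t ^ 2 / 4) / η)
    (ρ η : ℝ) (hη : 0 < η) :
    poissonBracket κ a (fun ρ' η' => Complex.exp (I * (r η' : ℂ) * (ρ' : ℂ)))
        (fun _ η' => ((χ η' : ℝ) : ℂ)) ρ η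
      = (I / (hbar : ℂ)) * Complex.exp (I * (r η : ℂ) * (ρ : ℂ)) ∧
    ∀ s : ℝ, s = 1 ∨ s = -1 →
      poissonBracket κ a (fun ρ' η' => Complex.exp ((s : ℂ) * I * (r η' : ℂ) * (ρ' : ℂ)))
          (fun _ η' => ((χ η' : ℝ) : ℂ)) ρ η
        = (s : ℂ) * (I / (hbar : ℂ)) * Complex.exp ((s : ℂ) * I * (r η : ℂ) * (ρ : ℂ)) := by
  have ht0 : 0 < t := by rw [ht]; positivity
  have hχ' : HasDerivAt χ (η / (t ^ 2 * √((η / t) ^ 2 + 1 / 4))) η := by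
    rw [funext hχ]
    exact hasDerivAt_sqrt_div_sq_add_quarter_sub_half ht0.ne' η
  have hcoeff : κ / a ^ 2 * (r η * (η / (t ^ 2 * √((η / t) ^ 2 + 1 / 4)))) = 1 / hbar := by
    rw [hr, sqrt_div_mul_div_sqrt ht0 hη.ne', ht]
    field_simp
  have hshift (c : ℂ) :
      poissonBracket κ a (fun ρ' η' => cexp (c * r η' * ρ')) (fun _ η' => (χ η' : ℂ)) ρ η
        = c * (1 / hbar) * cexp (c * r η * ρ) := by
    rw [poissonBracket_cexp_mul_ofReal κ a c r χ hχ', hcoeff]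
    push_cast
    ring
  exact ⟨by rw [hshift]; ring, fun s _ => by rw [hshift]; ring⟩
end

section
/- Let N ≥ 2, λ ∈ ℂ, and suppose (c₁, …, c_N) ∈ ℂ^N is a nonzero solution of the system c_{j−1} − c_{j+1} = 2iλ c_j for 2 ≤ j ≤ N−1, together with c_{N−1} = 2iλ c_N and −c₂ = 2iλ c₁. Then there exists k ∈ {1, …, N} with λ = cos(kπ/(N+1)); conversely, for each such k a nonzero solution exists. -/
/-!
Substituting `c j = (-I) ^ j * b j` turns the system into the Chebyshev recurrence
`b (j + 1) = 2 * λ * b j - b (j - 1)` with the Dirichlet conditions `b 0 = b (N + 1) = 0`.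
Every solution is therefore a multiple of `b j = U_{j-1}(λ)`, and a nonzero one exists exactly
when `U_N(λ) = 0`; the roots of `U_N` are the `cos (k * π / (N + 1))`, `1 ≤ k ≤ N`.
-/

open Complex Polynomial Polynomial.Chebyshev

noncomputable def chebyshevSolution (lam : ℂ) (j : ℕ) : ℂ :=
  (-I) ^ j * (U ℂ ((j : ℤ) - 1)).eval lam

theorem chebyshevSolution_zero (lam : ℂ) : chebyshevSolution lam 0 = 0 := by
  simp [chebyshevSolution]

theorem chebyshevSolution_one (lam : ℂ) : chebyshevSolution lam 1 = -I := by
  simp [chebyshevSolution]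

theorem chebyshevSolution_pred_sub_succ (lam : ℂ) {j : ℕ} (hj : 1 ≤ j) :
    chebyshevSolution lam (j - 1) - chebyshevSolution lam (j + 1) =
      2 * I * lam * chebyshevSolution lam j := by
  obtain ⟨m, rfl⟩ : ∃ m, j = m + 1 := ⟨j - 1, by omega⟩
  have hU := congrArg (eval lam) (U_add_one ℂ m)
  simp only [eval_sub, eval_mul, eval_ofNat, eval_X] at hU
  simp only [chebyshevSolution, Nat.add_sub_cancel]
  push_cast
  rw [show (m : ℤ) + 1 + 1 - 1 = m + 1 by ring, show (m : ℤ) + 1 - 1 = m by ring, hU]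
  linear_combination (-I) ^ m * eval lam (U ℂ (↑m - 1)) * I_sq

theorem chebyshevSolution_pred_eq_iff_isRoot (lam : ℂ) {N : ℕ} (hN : 1 ≤ N) :
    chebyshevSolution lam (N - 1) = 2 * I * lam * chebyshevSolution lam N ↔
      (U ℂ N).IsRoot lam := by
  have hrec := chebyshevSolution_pred_sub_succ lam hN
  have hlast : chebyshevSolution lam (N + 1) = (-I) ^ (N + 1) * (U ℂ N).eval lam := by
    simp [chebyshevSolution]
  have hI : (-I) ^ (N + 1) ≠ 0 := pow_ne_zero _ (neg_ne_zero.mpr I_ne_zero)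
  rw [IsRoot.def, ← mul_eq_zero_iff_left hI, ← hlast]
  constructor <;> intro h
  · linear_combination h - hrec
  · linear_combination hrec + h

theorem eq_mul_chebyshevSolution {N : ℕ} {lam : ℂ} {c : ℕ → ℂ}
    (hint : ∀ j : ℕ, 2 ≤ j → j ≤ N - 1 → c (j - 1) - c (j + 1) = 2 * I * lam * c j)
    (hbot : -c 2 = 2 * I * lam * c 1) :
    ∀ j, 1 ≤ j → j ≤ N → c j = I * c 1 * chebyshevSolution lam j := by
  intro j
  induction j using Nat.strong_induction_on with
  | _ j ih =>
    rcases j with _ | _ | _ | m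
    · omega
    · intro _ _
      rw [chebyshevSolution_one]
      linear_combination c 1 * I_sq
    · intro _ _
      have hs := chebyshevSolution_pred_sub_succ lam (j := 1) le_rfl
      rw [chebyshevSolution_zero, chebyshevSolution_one] at hs
      linear_combination -hbot + I * c 1 * hs - 2 * I * lam * c 1 * I_sq
    · intro _ hm
      have hs := chebyshevSolution_pred_sub_succ lam (j := m + 2) (by omega)
      have hc := hint (m + 2) (by omega) (by omega)
      simp only [show m + 2 - 1 = m + 1 from rfl] at hs hc
      show c (m + 3) = I * c 1 * chebyshevSolution lam (m + 3)
      linear_combination ih (m + 1) (by omega) (by omega) (by omega) - hc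
        - 2 * I * lam * ih (m + 2) (by omega) (by omega) (by omega) + I * c 1 * hs

theorem roots_U_complex (n : ℕ) : (U ℂ n).roots = (U ℝ n).roots.map (↑) := by
  have hcard : (U ℝ n).roots.card = (U ℝ n).natDegree := by
    rw [roots_U_real, natDegree_U_natCast, Finset.card_val, Finset.card_image_of_injOn,
      Finset.card_range]
    exact (Finset.range n).nodup_map_iff_injOn.mp (roots_U_real_nodup n)
  rw [← map_U (algebraMap ℝ ℂ),
    ← roots_map_of_injective_of_card_eq_natDegree (algebraMap ℝ ℂ).injective hcard]
  rfl

theorem isRoot_U_complex_iff {n : ℕ} {x : ℂ} :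
    (U ℂ n).IsRoot x ↔
      ∃ k : ℕ, 1 ≤ k ∧ k ≤ n ∧ x = ((Real.cos (k * Real.pi / (n + 1)) : ℝ) : ℂ) := by
  have hne : U ℂ n ≠ 0 := by
    intro h
    simpa [h] using degree_U_natCast ℂ n
  rw [← mem_roots hne, roots_U_complex, roots_U_real]
  simp only [Finset.image_val, Finset.range_val, Multiset.mem_map, Multiset.mem_dedup,
    Multiset.mem_range, exists_exists_and_eq_and]
  constructor
  · rintro ⟨k, hk, rfl⟩
    exact ⟨k + 1, by omega, hk, by push_cast; ring_nf⟩
  · rintro ⟨k, hk1, hkn, rfl⟩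
    exact ⟨k - 1, by omega, by rw [Nat.cast_sub hk1]; push_cast; ring_nf⟩

/-- Eigenvalue condition for the regularized extrinsic-curvature difference system:
a nonzero solution of `c_{j−1} − c_{j+1} = 2iλ c_j` (for `2 ≤ j ≤ N−1`) with the
boundary equations `c_{N−1} = 2iλ c_N` and `−c₂ = 2iλ c₁` exists exactly when
`λ = cos(kπ/(N+1))` for some `k ∈ {1,…,N}`. -/
theorem omega_eigenvalue_condition (N : ℕ) (hN : 2 ≤ N) :
    (∀ (lam : ℂ) (c : ℕ → ℂ),
      (∃ j : ℕ, 1 ≤ j ∧ j ≤ N ∧ c j ≠ 0) →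
      (∀ j : ℕ, 2 ≤ j → j ≤ N - 1 → c (j - 1) - c (j + 1) = 2 * I * lam * c j) →
      c (N - 1) = 2 * I * lam * c N →
      -c 2 = 2 * I * lam * c 1 →
      ∃ k : ℕ, 1 ≤ k ∧ k ≤ N ∧ lam = ((Real.cos (k * Real.pi / (N + 1)) : ℝ) : ℂ)) ∧
    (∀ k : ℕ, 1 ≤ k → k ≤ N → ∃ c : ℕ → ℂ,
      (∃ j : ℕ, 1 ≤ j ∧ j ≤ N ∧ c j ≠ 0) ∧
      (∀ j : ℕ, 2 ≤ j → j ≤ N - 1 →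
        c (j - 1) - c (j + 1) =
          2 * I * ((Real.cos (k * Real.pi / (N + 1)) : ℝ) : ℂ) * c j) ∧
      c (N - 1) = 2 * I * ((Real.cos (k * Real.pi / (N + 1)) : ℝ) : ℂ) * c N ∧
      -c 2 = 2 * I * ((Real.cos (k * Real.pi / (N + 1)) : ℝ) : ℂ) * c 1) := by
  constructor
  · intro lam c ⟨j, hj1, hjN, hcj⟩ hint htop hbot
    have hc := eq_mul_chebyshevSolution hint hbot
    have hc1 : I * c 1 ≠ 0 := by
      contrapose! hcj
      rw [hc j hj1 hjN, hcj, zero_mul]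
    rw [← isRoot_U_complex_iff, ← chebyshevSolution_pred_eq_iff_isRoot lam (by omega)]
    rw [hc (N - 1) (by omega) (by omega), hc N (by omega) le_rfl] at htop
    exact mul_left_cancel₀ hc1 (by linear_combination htop)
  · intro k hk1 hkN
    have hroot := isRoot_U_complex_iff.mpr ⟨k, hk1, hkN, rfl⟩
    refine ⟨chebyshevSolution _, ⟨1, le_rfl, by omega, ?_⟩,
      fun j hj _ => chebyshevSolution_pred_sub_succ _ (by omega),
      (chebyshevSolution_pred_eq_iff_isRoot _ (by omega)).mpr hroot, ?_⟩
    · simp [chebyshevSolution_one]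
    · simpa [chebyshevSolution_zero] using chebyshevSolution_pred_sub_succ _ le_rfl
end
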